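/- On the region of phase space where H < 0 and r ≠ 0, the rescaled Runge–Lenz vector A = M/√(−2H) together with L satisfies {L_i, L_j} = ε_{ijk} L_k, {L_i, A_j} = ε_{ijk} A_k, and {A_i, A_j} = ε_{ijk} L_k; hence (L, A) spans a Poisson-bracket realization of the Lie algebra so(4). -/

import Mathlib

noncomputable section

/-- Phase space ℝ³ × ℝ³ with coordinates (r, p). -/
abbrev Phase := (Fin 3 → ℝ) × (Fin 3 → ℝ)

/-- The standard Poisson bracket {f,g} = Σ_k (∂f/∂r_k ∂g/∂p_k − ∂f/∂p_k ∂g/∂r_k). -/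
def pb (f g : Phase → ℝ) (x : Phase) : ℝ :=
  ∑ k : Fin 3,
    (fderiv ℝ f x (Pi.single k 1, 0) * fderiv ℝ g x (0, Pi.single k 1)
      - fderiv ℝ f x (0, Pi.single k 1) * fderiv ℝ g x (Pi.single k 1, 0))

/-- The Levi-Civita symbol on Fin 3. -/
def eps (i j k : Fin 3) : ℝ :=
  if (i, j, k) ∈ [((0 : Fin 3), (1 : Fin 3), (2 : Fin 3)), (1, 2, 0), (2, 0, 1)] then 1
  else if (i, j, k) ∈ [((0 : Fin 3), (2 : Fin 3), (1 : Fin 3)), (2, 1, 0), (1, 0, 2)] then -1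
  else 0

/-- Euclidean norm on ℝ³. -/
def eucNorm (v : Fin 3 → ℝ) : ℝ := Real.sqrt (∑ k : Fin 3, v k ^ 2)

/-- Euclidean dot product on ℝ³. -/
def edot (v w : Fin 3 → ℝ) : ℝ := ∑ k : Fin 3, v k * w k

/-- Angular momentum L_i = ε_{ijk} r_j p_k. -/
def angL (i : Fin 3) (x : Phase) : ℝ :=
  ∑ j : Fin 3, ∑ k : Fin 3, eps i j k * x.1 j * x.2 k

/-- The Kepler Hamiltonian H = |p|²/2 − 1/|r|. -/
def ham (x : Phase) : ℝ := (∑ k : Fin 3, x.2 k ^ 2) / 2 - 1 / eucNorm x.1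

/-- The Runge–Lenz vector M = p × L − r/|r|. -/
def rlM (i : Fin 3) (x : Phase) : ℝ :=
  (∑ j : Fin 3, ∑ k : Fin 3, eps i j k * x.2 j * angL k x) - x.1 i / eucNorm x.1

/-- The rescaled Runge–Lenz vector A = M/√(−2H) for negative energy. -/
def rlA (i : Fin 3) (x : Phase) : ℝ := rlM i x / Real.sqrt (-2 * ham x)

/-!
The conserved quantities L, M and H have explicit gradients, from which one reads off
{L_i, L_j} = ε_{ijk} L_k, {L_i, M_j} = ε_{ijk} M_k, {L_i, H} = {M_i, H} = 0 and
{M_i, M_j} = -2H ε_{ijk} L_k. Writing A_i = M_i · ψ(H) with ψ(t) = (-2t)^{-1/2}, the chain rule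
makes ψ(H) Poisson-commute with L and M, so by the Leibniz rule it factors out of the brackets:
{L_i, A_j} = ψ(H) ε_{ijk} M_k = ε_{ijk} A_k and {A_i, A_j} = ψ(H)² (-2H) ε_{ijk} L_k = ε_{ijk} L_k.
-/

theorem pb_self (f : Phase → ℝ) (x : Phase) : pb f f x = 0 :=
  Finset.sum_eq_zero fun _ _ => sub_eq_zero.2 (mul_comm _ _)

theorem pb_anticomm (f g : Phase → ℝ) (x : Phase) : pb g f x = -pb f g x := by
  simp only [pb, ← Finset.sum_neg_distrib, neg_sub, mul_comm]

theorem pb_mul_right (f : Phase → ℝ) {g h : Phase → ℝ} {x : Phase}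
    (hg : DifferentiableAt ℝ g x) (hh : DifferentiableAt ℝ h x) :
    pb f (fun y => g y * h y) x = g x * pb f h x + h x * pb f g x := by
  simp only [pb, fderiv_fun_mul hg hh, add_apply, smul_apply, smul_eq_mul, Finset.mul_sum,
    ← Finset.sum_add_distrib]
  exact Finset.sum_congr rfl fun _ _ => by ring

theorem pb_mul_left (f : Phase → ℝ) {g h : Phase → ℝ} {x : Phase}
    (hg : DifferentiableAt ℝ g x) (hh : DifferentiableAt ℝ h x) :
    pb (fun y => g y * h y) f x = g x * pb h f x + h x * pb g f x := by
  rw [pb_anticomm, pb_mul_right f hg hh, pb_anticomm f g, pb_anticomm f h]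
  ring

theorem pb_comp_right (f : Phase → ℝ) {φ : ℝ → ℝ} {g : Phase → ℝ} {x : Phase}
    (hφ : DifferentiableAt ℝ φ (g x)) (hg : DifferentiableAt ℝ g x) :
    pb f (φ ∘ g) x = deriv φ (g x) * pb f g x := by
  simp only [pb, (hφ.hasDerivAt.comp_hasFDerivAt x hg.hasFDerivAt).fderiv, smul_apply,
    smul_eq_mul, Finset.mul_sum]
  exact Finset.sum_congr rfl fun _ _ => by ring

theorem pb_mul_mul_of_pb_eq_zero {f g h : Phase → ℝ} {x : Phase}
    (hf : DifferentiableAt ℝ f x) (hg : DifferentiableAt ℝ g x) (hh : DifferentiableAt ℝ h x)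
    (hfh : pb f h x = 0) (hgh : pb g h x = 0) :
    pb (fun y => f y * h y) (fun y => g y * h y) x = h x ^ 2 * pb f g x := by
  rw [pb_mul_left _ hf hh, pb_mul_right _ hg hh, pb_mul_right _ hg hh, pb_self,
    pb_anticomm g, hfh, hgh]
  ring

/-- The differential `(u, v) ↦ a ⬝ u + b ⬝ v` of a function with `∂/∂r = a` and `∂/∂p = b`. -/
def gradForm (a b : Fin 3 → ℝ) : Phase →L[ℝ] ℝ :=
  ∑ k, (a k • (ContinuousLinearMap.proj k).comp (ContinuousLinearMap.fst ℝ _ _)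
    + b k • (ContinuousLinearMap.proj k).comp (ContinuousLinearMap.snd ℝ _ _))

@[simp] theorem gradForm_apply (a b : Fin 3 → ℝ) (v : Phase) :
    gradForm a b v = edot a v.1 + edot b v.2 := by
  simp [gradForm, edot, Finset.sum_add_distrib]

theorem pb_eq_of_hasFDerivAt {f g : Phase → ℝ} {x : Phase} {a b c d : Fin 3 → ℝ}
    (hf : HasFDerivAt f (gradForm a b) x) (hg : HasFDerivAt g (gradForm c d) x) :
    pb f g x = edot a d - edot b c := by
  simp [pb, hf.fderiv, hg.fderiv, edot, Pi.single_apply, Finset.sum_sub_distrib]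

theorem hasFDerivAt_fst_apply (k : Fin 3) (x : Phase) :
    HasFDerivAt (fun y : Phase => y.1 k) (gradForm (Pi.single k 1) 0) x := by
  convert (gradForm (Pi.single k 1) 0).hasFDerivAt using 1
  ext y
  simp [edot, Pi.single_apply]

theorem hasFDerivAt_snd_apply (k : Fin 3) (x : Phase) :
    HasFDerivAt (fun y : Phase => y.2 k) (gradForm 0 (Pi.single k 1)) x := by
  convert (gradForm 0 (Pi.single k 1)).hasFDerivAt using 1
  ext y
  simp [edot, Pi.single_apply]

theorem eucNorm_sq (v : Fin 3 → ℝ) : eucNorm v ^ 2 = edot v v := by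
  rw [eucNorm, Real.sq_sqrt (Finset.sum_nonneg fun k _ => sq_nonneg (v k))]
  simp only [edot, sq]

theorem eucNorm_pos {v : Fin 3 → ℝ} (hv : v ≠ 0) : 0 < eucNorm v := by
  obtain ⟨k, hk⟩ := Function.ne_iff.mp hv
  exact Real.sqrt_pos.mpr <| Finset.sum_pos' (fun k _ => sq_nonneg (v k))
    ⟨k, Finset.mem_univ k, sq_pos_of_ne_zero hk⟩

theorem hasFDerivAt_eucNorm_fst {x : Phase} (hx : x.1 ≠ 0) :
    HasFDerivAt (fun y : Phase => eucNorm y.1) (gradForm (fun k => x.1 k / eucNorm x.1) 0) x := by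
  refine ((HasFDerivAt.fun_sum fun k _ => (hasFDerivAt_fst_apply k x).pow 2).sqrt
    (Real.sqrt_pos.mp (eucNorm_pos hx)).ne').congr_fderiv ?_
  ext v <;> simp [edot, Pi.single_apply, eucNorm, Finset.mul_sum]
  field_simp

theorem hasFDerivAt_inv_eucNorm_fst {x : Phase} (hx : x.1 ≠ 0) :
    HasFDerivAt (fun y : Phase => (eucNorm y.1)⁻¹)
      (gradForm (fun k => -x.1 k / eucNorm x.1 ^ 3) 0) x := by
  have hn := (eucNorm_pos hx).ne'
  refine ((hasDerivAt_inv hn).comp_hasFDerivAt x (hasFDerivAt_eucNorm_fst hx)).congr_fderiv ?_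
  ext v <;> simp [edot, Finset.mul_sum, ← Finset.sum_neg_distrib]
  exact Finset.sum_congr rfl fun k _ => by field_simp

theorem hasFDerivAt_angL (i : Fin 3) (x : Phase) :
    HasFDerivAt (angL i)
      (gradForm (fun k => ∑ l, eps i k l * x.2 l) (fun k => ∑ j, eps i j k * x.1 j)) x := by
  refine (HasFDerivAt.fun_sum fun j _ => HasFDerivAt.fun_sum fun l _ =>
    ((hasFDerivAt_fst_apply j x).const_mul (eps i j l)).mul
      (hasFDerivAt_snd_apply l x)).congr_fderiv ?_
  ext v <;> simp [edot, Fin.sum_univ_three, Pi.single_apply] <;> ring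

theorem hasFDerivAt_ham {x : Phase} (hx : x.1 ≠ 0) :
    HasFDerivAt ham (gradForm (fun k => x.1 k / eucNorm x.1 ^ 3) x.2) x := by
  rw [show ham = fun y : Phase => (∑ k, y.2 k ^ 2) * 2⁻¹ - (eucNorm y.1)⁻¹ from
    funext fun y => by rw [ham, div_eq_mul_inv, one_div]]
  refine (((HasFDerivAt.fun_sum fun k _ => (hasFDerivAt_snd_apply k x).pow 2).mul_const 2⁻¹).sub
    (hasFDerivAt_inv_eucNorm_fst hx)).congr_fderiv ?_
  ext v <;> simp [edot, neg_div, Finset.mul_sum, Pi.single_apply]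
  exact Finset.sum_congr rfl fun k _ => by ring

/-- `p × (r × p) = r |p|² - p (r ⬝ p)`. -/
theorem rlM_eq (i : Fin 3) (x : Phase) :
    rlM i x = x.1 i * edot x.2 x.2 - x.2 i * edot x.1 x.2 - x.1 i / eucNorm x.1 := by
  fin_cases i <;> simp [rlM, angL, eps, edot, Fin.sum_univ_three] <;> ring

theorem hasFDerivAt_rlM (i : Fin 3) {x : Phase} (hx : x.1 ≠ 0) :
    HasFDerivAt (rlM i)
      (gradForm (fun k => (if k = i then edot x.2 x.2 - 1 / eucNorm x.1 else 0)
          - x.2 i * x.2 k + x.1 i * x.1 k / eucNorm x.1 ^ 3)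
        (fun k => 2 * x.1 i * x.2 k - (if k = i then edot x.1 x.2 else 0) - x.2 i * x.1 k)) x := by
  rw [show rlM i = fun y : Phase => y.1 i * (∑ k, y.2 k * y.2 k) - y.2 i * (∑ k, y.1 k * y.2 k)
      - y.1 i * (eucNorm y.1)⁻¹ from funext fun y => by rw [rlM_eq, div_eq_mul_inv]; rfl]
  refine ((((hasFDerivAt_fst_apply i x).mul (HasFDerivAt.fun_sum fun k _ =>
      (hasFDerivAt_snd_apply k x).mul (hasFDerivAt_snd_apply k x))).sub
    ((hasFDerivAt_snd_apply i x).mul (HasFDerivAt.fun_sum fun k _ =>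
      (hasFDerivAt_fst_apply k x).mul (hasFDerivAt_snd_apply k x)))).sub
    ((hasFDerivAt_fst_apply i x).mul (hasFDerivAt_inv_eucNorm_fst hx))).congr_fderiv ?_
  have hn := (eucNorm_pos hx).ne'
  ext v <;> simp [edot, Pi.single_apply, Fin.sum_univ_three] <;> fin_cases i <;> simp <;>
    field_simp <;> ring

theorem pb_angL_angL (i j : Fin 3) (x : Phase) :
    pb (angL i) (angL j) x = ∑ k, eps i j k * angL k x := by
  rw [pb_eq_of_hasFDerivAt (hasFDerivAt_angL i x) (hasFDerivAt_angL j x)]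
  fin_cases i <;> fin_cases j <;> simp [edot, angL, eps, Fin.sum_univ_three] <;> ring

theorem pb_angL_ham (i : Fin 3) {x : Phase} (hx : x.1 ≠ 0) : pb (angL i) ham x = 0 := by
  rw [pb_eq_of_hasFDerivAt (hasFDerivAt_angL i x) (hasFDerivAt_ham hx)]
  fin_cases i <;> simp [edot, eps, Fin.sum_univ_three] <;> ring

theorem pb_angL_rlM (i j : Fin 3) {x : Phase} (hx : x.1 ≠ 0) :
    pb (angL i) (rlM j) x = ∑ k, eps i j k * rlM k x := by
  rw [pb_eq_of_hasFDerivAt (hasFDerivAt_angL i x) (hasFDerivAt_rlM j hx)]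
  simp only [rlM_eq]
  fin_cases i <;> fin_cases j <;> simp [edot, eps, Fin.sum_univ_three] <;> ring

/- In the next two brackets the coordinate computation holds only modulo `|r|² = eucNorm r ^ 2`,
so it is stated with `edot r r` kept apart and the relation is applied afterwards. -/

theorem pb_rlM_ham (i : Fin 3) {x : Phase} (hx : x.1 ≠ 0) : pb (rlM i) ham x = 0 := by
  have hn := (eucNorm_pos hx).ne'
  have h : pb (rlM i) ham x = x.2 i * (edot x.1 x.1 / eucNorm x.1 ^ 3 - 1 / eucNorm x.1) := by
    rw [pb_eq_of_hasFDerivAt (hasFDerivAt_rlM i hx) (hasFDerivAt_ham hx)]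
    fin_cases i <;> simp [edot, Fin.sum_univ_three] <;> ring
  rw [h, ← eucNorm_sq]
  field_simp
  ring

theorem pb_rlM_rlM (i j : Fin 3) {x : Phase} (hx : x.1 ≠ 0) :
    pb (rlM i) (rlM j) x = -2 * ham x * ∑ k, eps i j k * angL k x := by
  have hn := (eucNorm_pos hx).ne'
  have h : pb (rlM i) (rlM j) x =
      (3 / eucNorm x.1 - edot x.1 x.1 / eucNorm x.1 ^ 3 - edot x.2 x.2) *
        ∑ k, eps i j k * angL k x := by
    rw [pb_eq_of_hasFDerivAt (hasFDerivAt_rlM i hx) (hasFDerivAt_rlM j hx)]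
    fin_cases i <;> fin_cases j <;> simp [edot, eps, angL, Fin.sum_univ_three] <;> ring
  rw [h, ← eucNorm_sq, ham, edot]
  field_simp
  ring
/-- On {H < 0, r ≠ 0}: {L_i, L_j} = ε_{ijk} L_k, {L_i, A_j} = ε_{ijk} A_k,
    {A_i, A_j} = ε_{ijk} L_k — a Poisson realization of so(4). -/
theorem so4_realization (i j : Fin 3) (x : Phase) (hx : x.1 ≠ 0) (hH : ham x < 0) :
    pb (angL i) (angL j) x = ∑ k : Fin 3, eps i j k * angL k x ∧
    pb (angL i) (rlA j) x = ∑ k : Fin 3, eps i j k * rlA k x ∧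
    pb (rlA i) (rlA j) x = ∑ k : Fin 3, eps i j k * angL k x := by
  set ψ : ℝ → ℝ := fun t => (√(-2 * t))⁻¹
  have hA (k : Fin 3) : rlA k = fun y => rlM k y * (ψ ∘ ham) y :=
    funext fun y => div_eq_mul_inv _ _
  have h2H : 0 < -2 * ham x := by linarith
  have hψ : DifferentiableAt ℝ ψ (ham x) :=
    (((differentiableAt_id (x := ham x)).const_mul (-2)).sqrt h2H.ne').inv (Real.sqrt_pos.2 h2H).ne'
  have hH' := (hasFDerivAt_ham hx).differentiableAt
  have hψH := hψ.comp x hH'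
  have hM (k : Fin 3) := (hasFDerivAt_rlM k hx).differentiableAt
  have hMψ (k : Fin 3) : pb (rlM k) (ψ ∘ ham) x = 0 := by
    rw [pb_comp_right _ hψ hH', pb_rlM_ham k hx, mul_zero]
  refine ⟨pb_angL_angL i j x, ?_, ?_⟩
  · rw [hA, pb_mul_right _ (hM j) hψH, pb_comp_right _ hψ hH', pb_angL_ham i hx,
      pb_angL_rlM i j hx]
    simp only [hA, mul_zero, zero_add, Function.comp_apply, Finset.mul_sum]
    exact Finset.sum_congr rfl fun k _ => by ring
  · rw [hA, hA, pb_mul_mul_of_pb_eq_zero (hM i) (hM j) hψH (hMψ i) (hMψ j), pb_rlM_rlM i j hx]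
    simp only [Function.comp_apply, ψ, inv_pow, Real.sq_sqrt h2H.le]
    field_simp [hH.ne]
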